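/- arXiv:1808.08058 — 3 statements merged into one kernel-verified Lean document; each statement's English description precedes it below -/
import Mathlib

section
/- For the generalized Lorenz–Krishnamurthy vector field with δ = 0 (so that u' = v' = w' = 0), the Lie derivative of φ(x,y,u,v,w) = (x + ε·u·v/(1+κ²))² + (y − κ·ε·u·v/(1+κ²))² along the vector field equals −2κ·φ; hence the singular approximation {x = −ε·u·v/(1+κ²), y = κ·ε·u·v/(1+κ²)} is a Darboux invariant manifold with cofactor −2κ. -/
/-!
In the coordinates `p = x - x₀`, `q = y - y₀` centred at the equilibrium
`(x₀, y₀) = (-c, κ c) / (1 + κ²)`, `c = ε u v`, of the (x, y)-subsystem, the flow is a rotation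
combined with a uniform scaling at rate `-κ`, so `p² + q²` has cofactor `-2κ`.
-/

theorem hasDerivAt_sq_add_sq_of_spiral {p q : ℝ → ℝ} {κ ω t : ℝ}
    (hp : HasDerivAt p (-ω * q t - κ * p t) t) (hq : HasDerivAt q (ω * p t - κ * q t) t) :
    HasDerivAt (fun s => p s ^ 2 + q s ^ 2) (-2 * κ * (p t ^ 2 + q t ^ 2)) t :=
  ((hp.fun_pow 2).fun_add (hq.fun_pow 2)).congr_deriv (by push_cast; ring)

theorem LK_generalized_singular_approx_darboux_general (κ ε : ℝ) (x y u v : ℝ → ℝ)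
    (hx : ∀ t, HasDerivAt x (-(y t) - κ * x t) t)
    (hy : ∀ t, HasDerivAt y (x t + ε * u t * v t - κ * y t) t)
    (hu : ∀ t, HasDerivAt u 0 t)
    (hv : ∀ t, HasDerivAt v 0 t) :
    ∀ t : ℝ, HasDerivAt
      (fun s => (x s + ε * u s * v s / (1 + κ ^ 2)) ^ 2
              + (y s - κ * ε * u s * v s / (1 + κ ^ 2)) ^ 2)
      (-2 * κ * ((x t + ε * u t * v t / (1 + κ ^ 2)) ^ 2
               + (y t - κ * ε * u t * v t / (1 + κ ^ 2)) ^ 2)) t := by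
  intro t
  have hshift (c : ℝ) : HasDerivAt (fun s => c * u s * v s / (1 + κ ^ 2)) 0 t := by
    simpa using (((hu t).const_mul c).mul (hv t)).div_const (1 + κ ^ 2)
  have hκ : (1 : ℝ) + κ ^ 2 ≠ 0 := by positivity
  refine hasDerivAt_sq_add_sq_of_spiral (ω := 1) ?_ ?_
  · exact ((hx t).fun_add (hshift ε)).congr_deriv (by ring)
  · refine ((hy t).fun_sub (hshift (κ * ε))).congr_deriv ?_
    field_simp
    ring

/-- For the generalized Lorenz–Krishnamurthy system at δ = 0 (so u, v, w are
constant along the flow), the function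
φ = (x + ε·u·v/(1+κ²))² + (y − κ·ε·u·v/(1+κ²))²
is a Darboux invariant with cofactor −2κ: along any solution,
d/dt φ = −2κ·φ. -/
theorem LK_generalized_singular_approx_darboux (κ ε : ℝ) (x y u v w : ℝ → ℝ)
    (hx : ∀ t, HasDerivAt x (-(y t) - κ * x t) t)
    (hy : ∀ t, HasDerivAt y (x t + ε * u t * v t - κ * y t) t)
    (hu : ∀ t, HasDerivAt u 0 t)
    (hv : ∀ t, HasDerivAt v 0 t)
    (hw : ∀ t, HasDerivAt w 0 t) :
    ∀ t : ℝ, HasDerivAt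
      (fun s => (x s + ε * u s * v s / (1 + κ ^ 2)) ^ 2
              + (y s - κ * ε * u s * v s / (1 + κ ^ 2)) ^ 2)
      (-2 * κ * ((x t + ε * u t * v t / (1 + κ ^ 2)) ^ 2
               + (y t - κ * ε * u t * v t / (1 + κ ^ 2)) ^ 2)) t :=
  LK_generalized_singular_approx_darboux_general κ ε x y u v hx hy hu hv
end

section
/- Let φ : ℝⁿ → ℝ be C¹ and suppose there exists a continuous function k : ℝⁿ → ℝ with ∇φ(X)·V(X) = k(X)·φ(X) for all X, where V is a locally Lipschitz vector field. Then the zero set {X : φ(X) = 0} is invariant under the flow of V: any solution starting on it stays on it. -/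
/-!
Along a solution γ, the Darboux relation turns `f t = φ (γ t)` into a solution of the scalar
linear equation `f' = (k ∘ γ) f`. Multiplying by the integrating factor `exp (-∫₀ᵗ k (γ s) ds)`
gives a function with zero derivative, so `f t = exp (∫₀ᵗ k (γ s) ds) * f 0`, which vanishes
when `f 0 = 0`.
-/

open Real

theorem eq_exp_integral_mul_of_hasDerivAt_mul_self {f g : ℝ → ℝ} (hg : Continuous g)
    (hf : ∀ t, HasDerivAt f (g t * f t) t) (t : ℝ) :
    f t = exp (∫ s in (0 : ℝ)..t, g s) * f 0 := by
  set G : ℝ → ℝ := fun u => ∫ s in (0 : ℝ)..u, g s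
  have hG : ∀ u, HasDerivAt G (g u) u := fun u => (hg.integral_hasStrictDerivAt 0 u).hasDerivAt
  have hconst_deriv : ∀ u, HasDerivAt (fun u => exp (-G u) * f u) 0 u := fun u =>
    (((hG u).neg.exp).mul (hf u)).congr_deriv (by ring)
  have hconst := is_const_of_deriv_eq_zero
    (fun u => (hconst_deriv u).differentiableAt) (fun u => (hconst_deriv u).deriv) t 0
  have hG0 : G 0 = 0 := intervalIntegral.integral_same
  simp only [hG0, neg_zero, exp_zero, one_mul] at hconst
  rw [← hconst, ← mul_assoc, ← exp_add, add_neg_cancel, exp_zero, one_mul]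

theorem hasDerivAt_comp_of_fderiv_apply_eq_mul {E : Type*} [NormedAddCommGroup E]
    [NormedSpace ℝ E] {V : E → E} {φ k : E → ℝ} (hφ : Differentiable ℝ φ)
    (hDarboux : ∀ X, fderiv ℝ φ X (V X) = k X * φ X) {γ : ℝ → E}
    (hγ : ∀ t, HasDerivAt γ (V (γ t)) t) (t : ℝ) :
    HasDerivAt (fun t => φ (γ t)) (k (γ t) * φ (γ t)) t := by
  rw [← hDarboux]
  exact (hφ (γ t)).hasFDerivAt.comp_hasDerivAt t (hγ t)

theorem darboux_invariance_general (n : ℕ) (V : (Fin n → ℝ) → (Fin n → ℝ))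
    (φ : (Fin n → ℝ) → ℝ) (hφ : ContDiff ℝ 1 φ)
    (k : (Fin n → ℝ) → ℝ) (hk : Continuous k)
    (hDarboux : ∀ X, fderiv ℝ φ X (V X) = k X * φ X)
    (γ : ℝ → (Fin n → ℝ)) (hγ : ∀ t, HasDerivAt γ (V (γ t)) t)
    (h0 : φ (γ 0) = 0) :
    ∀ t : ℝ, φ (γ t) = 0 := by
  intro t
  have hγc : Continuous γ := continuous_iff_continuousAt.2 fun t => (hγ t).continuousAt
  rw [eq_exp_integral_mul_of_hasDerivAt_mul_self (hk.comp hγc)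
    (hasDerivAt_comp_of_fderiv_apply_eq_mul (hφ.differentiable one_ne_zero) hDarboux hγ) t,
    h0, mul_zero]

/-- Darboux invariance theorem: if φ is C¹ and ∇φ·V = k·φ for a continuous
cofactor k and a locally Lipschitz vector field V, then the zero set of φ is
invariant under the flow of V. -/
theorem darboux_invariance (n : ℕ) (V : (Fin n → ℝ) → (Fin n → ℝ))
    (hV : LocallyLipschitz V)
    (φ : (Fin n → ℝ) → ℝ) (hφ : ContDiff ℝ 1 φ)
    (k : (Fin n → ℝ) → ℝ) (hk : Continuous k)
    (hDarboux : ∀ X, fderiv ℝ φ X (V X) = k X * φ X)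
    (γ : ℝ → (Fin n → ℝ)) (hγ : ∀ t, HasDerivAt γ (V (γ t)) t)
    (h0 : φ (γ 0) = 0) :
    ∀ t : ℝ, φ (γ t) = 0 :=
  darboux_invariance_general n V φ hφ k hk hDarboux γ hγ h0
end

section
/- Suppose Y : ℝᵖ → ℝᵐ is C¹ and satisfies the invariance PDE DY(x)·g(x, Y(x)) = f(x, Y(x)) where the combined vector field on ℝᵖ × ℝᵐ is (g, f). Define φ(x, y) = y − Y(x). Then the Lie derivative of φ along the vector field vanishes on the graph {y = Y(x)}, and hence the graph of Y is invariant under the flow. -/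
/-!
Along a trajectory `(γ₁, γ₂)` the deviation `w t = γ₂ t - Y (γ₁ t)` from the graph solves the
non-autonomous equation `w' = L(γ₁ t, w + Y (γ₁ t))`, where `L` is the Lie derivative of
`φ(x, y) = y - Y x` along `(g, f)`. The invariance equation says `L` vanishes on the graph, so
`w ≡ 0` is a solution too. On a compact time interval the trajectory and its projection to the
graph stay in a compact set, where `f` and `g` are Lipschitz and `DY` is bounded; hence this
equation is Lipschitz in `w` and uniqueness of solutions forces `w = 0`.
-/

open Set

variable {E F : Type*} [NormedAddCommGroup E] [NormedSpace ℝ E]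
  [NormedAddCommGroup F] [NormedSpace ℝ F]

/-- The Lie derivative of `φ(x, y) = y - Y x` along the vector field `(g, f)`. -/
noncomputable def graphLieDeriv (g : E × F → E) (f : E × F → F) (Y : E → F) (q : E × F) : F :=
  f q - fderiv ℝ Y q.1 (g q)

theorem graphLieDeriv_eq_zero_iff {g : E × F → E} {f : E × F → F} {Y : E → F} {x : E} :
    graphLieDeriv g f Y (x, Y x) = 0 ↔ fderiv ℝ Y x (g (x, Y x)) = f (x, Y x) := by
  rw [graphLieDeriv, sub_eq_zero, eq_comm]

theorem HasDerivAt.sub_comp_graphLieDeriv {g : E × F → E} {f : E × F → F} {Y : E → F}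
    {γ₁ : ℝ → E} {γ₂ : ℝ → F} {t : ℝ} (hY : DifferentiableAt ℝ Y (γ₁ t))
    (hγ₁ : HasDerivAt γ₁ (g (γ₁ t, γ₂ t)) t) (hγ₂ : HasDerivAt γ₂ (f (γ₁ t, γ₂ t)) t) :
    HasDerivAt (fun s ↦ γ₂ s - Y (γ₁ s)) (graphLieDeriv g f Y (γ₁ t, γ₂ t)) t :=
  hγ₂.sub (hY.hasFDerivAt.comp_hasDerivAt t hγ₁)

theorem lipschitzOnWith_graphLieDeriv_fiber {g : E × F → E} {f : E × F → F} {Y : E → F}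
    {C : Set (E × F)} {Kg Kf : NNReal} (hg : LipschitzOnWith Kg g C)
    (hf : LipschitzOnWith Kf f C) (x : E) :
    LipschitzOnWith (Kf + ‖fderiv ℝ Y x‖₊ * Kg) (fun y ↦ graphLieDeriv g f Y (x, y))
      {y | (x, y) ∈ C} := by
  have hfiber : MapsTo (Prod.mk x) {y | (x, y) ∈ C} C := fun _ hy ↦ hy
  have hf' := hf.comp (LipschitzWith.prodMk_left x).lipschitzOnWith hfiber
  have hg' := (fderiv ℝ Y x).lipschitz.comp_lipschitzOnWith
    (hg.comp (LipschitzWith.prodMk_left x).lipschitzOnWith hfiber)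
  have hdiff := hf'.sub hg'
  rwa [mul_one, mul_one] at hdiff

theorem exists_lipschitzOnWith_graphLieDeriv_along {g : E × F → E} {f : E × F → F}
    (hg : LocallyLipschitz g) (hf : LocallyLipschitz f) {Y : E → F} (hY : ContDiff ℝ 1 Y)
    {γ₁ : ℝ → E} {γ₂ : ℝ → F} (hγ₁ : Continuous γ₁) (hγ₂ : Continuous γ₂) {I : Set ℝ}
    (hI : IsCompact I) :
    ∃ (C : Set (E × F)) (K : NNReal), ∀ s ∈ I, (γ₁ s, γ₂ s) ∈ C ∧ (γ₁ s, Y (γ₁ s)) ∈ C ∧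
      LipschitzOnWith K (fun z ↦ graphLieDeriv g f Y (γ₁ s, z + Y (γ₁ s)))
        {z | (γ₁ s, z + Y (γ₁ s)) ∈ C} := by
  set C : Set (E × F) := (fun s ↦ (γ₁ s, γ₂ s)) '' I ∪ (fun s ↦ (γ₁ s, Y (γ₁ s))) '' I
  have hC : IsCompact C :=
    (hI.image (hγ₁.prodMk hγ₂)).union (hI.image (hγ₁.prodMk (hY.continuous.comp hγ₁)))
  obtain ⟨Kf, hKf⟩ := hf.locallyLipschitzOn.exists_lipschitzOnWith_of_compact hC
  obtain ⟨Kg, hKg⟩ := hg.locallyLipschitzOn.exists_lipschitzOnWith_of_compact hC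
  obtain ⟨M, hM⟩ := (hI.image ((hY.continuous_fderiv one_ne_zero).comp hγ₁).nnnorm).bddAbove
  refine ⟨C, Kf + M * Kg, fun s hs ↦ ⟨Or.inl (mem_image_of_mem _ hs),
    Or.inr (mem_image_of_mem _ hs), ?_⟩⟩
  have hDY : ‖fderiv ℝ Y (γ₁ s)‖₊ ≤ M := hM (mem_image_of_mem _ hs)
  refine ((lipschitzOnWith_graphLieDeriv_fiber hKg hKf (γ₁ s)).comp
    (isometry_add_right _).lipschitz.lipschitzOnWith fun _ hz ↦ hz).weaken ?_
  rw [mul_one]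
  gcongr

theorem graph_invariant_of_graphLieDeriv_eq_zero {g : E × F → E} {f : E × F → F}
    (hg : LocallyLipschitz g) (hf : LocallyLipschitz f) {Y : E → F} (hY : ContDiff ℝ 1 Y)
    (hL : ∀ x, graphLieDeriv g f Y (x, Y x) = 0) {γ₁ : ℝ → E} {γ₂ : ℝ → F}
    (hγ₁ : ∀ t, HasDerivAt γ₁ (g (γ₁ t, γ₂ t)) t) (hγ₂ : ∀ t, HasDerivAt γ₂ (f (γ₁ t, γ₂ t)) t)
    (h₀ : γ₂ 0 = Y (γ₁ 0)) (t : ℝ) : γ₂ t = Y (γ₁ t) := by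
  set T := |t| + 1
  obtain ⟨C, K, hC⟩ := exists_lipschitzOnWith_graphLieDeriv_along hg hf hY
    (continuous_iff_continuousAt.2 fun s ↦ (hγ₁ s).continuousAt)
    (continuous_iff_continuousAt.2 fun s ↦ (hγ₂ s).continuousAt) (isCompact_Icc (a := -T) (b := T))
  have hdev : ∀ s ∈ Ioo (-T) T,
      HasDerivAt (fun r ↦ γ₂ r - Y (γ₁ r))
        (graphLieDeriv g f Y (γ₁ s, (γ₂ s - Y (γ₁ s)) + Y (γ₁ s))) s ∧
      γ₂ s - Y (γ₁ s) ∈ {z | (γ₁ s, z + Y (γ₁ s)) ∈ C} := by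
    intro s hs
    rw [mem_ofPred_eq, sub_add_cancel]
    exact ⟨(hγ₁ s).sub_comp_graphLieDeriv ((hY.differentiable one_ne_zero) _) (hγ₂ s),
      (hC s (Ioo_subset_Icc_self hs)).1⟩
  have hzero : ∀ s ∈ Ioo (-T) T,
      HasDerivAt (fun _ ↦ (0 : F)) (graphLieDeriv g f Y (γ₁ s, 0 + Y (γ₁ s))) s ∧
      (0 : F) ∈ {z | (γ₁ s, z + Y (γ₁ s)) ∈ C} := by
    intro s hs
    rw [mem_ofPred_eq, zero_add, hL]
    exact ⟨hasDerivAt_const s 0, (hC s (Ioo_subset_Icc_self hs)).2.1⟩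
  have hT : ∀ r, |r| < T → r ∈ Ioo (-T) T := fun r hr ↦ abs_lt.1 hr
  have hdev_eq_zero := ODE_solution_unique_of_mem_Ioo
    (fun s hs ↦ (hC s (Ioo_subset_Icc_self hs)).2.2) (hT 0 (by simp [T]; positivity))
    hdev hzero (sub_eq_zero.2 h₀) (hT t (lt_add_one _))
  exact sub_eq_zero.1 hdev_eq_zero

/-- If Y is C¹ and satisfies the Fenichel invariance equation
DY(x)·g(x,Y(x)) = f(x,Y(x)) for the combined vector field (g, f), then the
Lie derivative of φ(x,y) = y − Y(x) vanishes on the graph {y = Y(x)}, and the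
graph of Y is invariant under the flow. -/
theorem fenichel_darboux_graph_invariance (p m : ℕ)
    (g : (Fin p → ℝ) × (Fin m → ℝ) → (Fin p → ℝ))
    (f : (Fin p → ℝ) × (Fin m → ℝ) → (Fin m → ℝ))
    (hg : LocallyLipschitz g) (hf : LocallyLipschitz f)
    (Y : (Fin p → ℝ) → (Fin m → ℝ)) (hY : ContDiff ℝ 1 Y)
    (hpde : ∀ x, fderiv ℝ Y x (g (x, Y x)) = f (x, Y x)) :
    (∀ x, f (x, Y x) - fderiv ℝ Y x (g (x, Y x)) = 0) ∧
    (∀ γ₁ : ℝ → (Fin p → ℝ), ∀ γ₂ : ℝ → (Fin m → ℝ),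
      (∀ t, HasDerivAt γ₁ (g (γ₁ t, γ₂ t)) t) →
      (∀ t, HasDerivAt γ₂ (f (γ₁ t, γ₂ t)) t) →
      γ₂ 0 = Y (γ₁ 0) → ∀ t : ℝ, γ₂ t = Y (γ₁ t)) := by
  have hL : ∀ x, graphLieDeriv g f Y (x, Y x) = 0 := fun x ↦ graphLieDeriv_eq_zero_iff.2 (hpde x)
  exact ⟨hL, fun _ _ hγ₁ hγ₂ h₀ ↦
    graph_invariant_of_graphLieDeriv_eq_zero hg hf hY hL hγ₁ hγ₂ h₀⟩
end
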